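/- Let ω_ext = H_S(q,p,t) dt + (2/3)(p dq - (1/2)q dp - 2t(tq + 2q³) dq + (t/2) p dp) viewed as a 1-form in variables (t, s₁, s₂) where q = q(t;s₁,s₂), p = p(t;s₁,s₂) with H_S(q,p,t) = p²/4 - tq² - q⁴, and where d acts only in s₁,s₂ directions on q,p in the non-dt terms. Then ω_ext - (p dq - H_S dt) = (1/3) d(2t H_S(q,p,t) - pq), i.e. the extended Jimbo–Miwa–Ueno form differs from the classical action differential by the total differential of (1/3)(2tH_S - pq), provided (q,p) satisfy q_t = p/2, p_t = 2tq + 4q³. -/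

import Mathlib

/-- The soft-edge Hamiltonian `H_S(q,p,t) = p²/4 - tq² - q⁴`. -/
noncomputable def HSext (q p t : ℝ) : ℝ := p ^ 2 / 4 - t * q ^ 2 - q ^ 4

/-! Write `F = 2tH_S - pq`. In an `s_j`-direction `t` is constant, and the chain rule gives the
`ds_j`-component at once. In the `t`-direction the flow is Hamilton's equations for `H_S`, so
`H_S` changes only through its explicit `t`-dependence, `d/dt H_S = -q²`, and the `dt`-component
reduces to a polynomial identity. -/

theorem hasDerivAt_HSext {Q P T : ℝ → ℝ} {Q' P' T' x : ℝ} (hQ : HasDerivAt Q Q' x)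
    (hP : HasDerivAt P P' x) (hT : HasDerivAt T T' x) :
    HasDerivAt (fun y => HSext (Q y) (P y) (T y))
      (P x / 2 * P' - (2 * T x * Q x + 4 * Q x ^ 3) * Q' - Q x ^ 2 * T') x := by
  have h := (((hP.pow 2).div_const 4).sub (hT.mul (hQ.pow 2))).sub (hQ.pow 4)
  refine h.congr_deriv ?_
  simp only [Pi.pow_apply]
  push_cast
  ring

theorem hasDerivAt_HSext_of_flow {q p : ℝ → ℝ} {t : ℝ}
    (hq : HasDerivAt q (p t / 2) t) (hp : HasDerivAt p (2 * t * q t + 4 * q t ^ 3) t) :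
    HasDerivAt (fun τ => HSext (q τ) (p τ) τ) (-q t ^ 2) t :=
  (hasDerivAt_HSext hq hp (hasDerivAt_id' t)).congr_deriv (by ring)

theorem extended_form_dt_component {q p : ℝ → ℝ} {t : ℝ}
    (hq : HasDerivAt q (p t / 2) t) (hp : HasDerivAt p (2 * t * q t + 4 * q t ^ 3) t) :
    HSext (q t) (p t) t - (p t * (p t / 2) - HSext (q t) (p t) t)
      = (1 / 3) * deriv (fun τ => 2 * τ * HSext (q τ) (p τ) τ - p τ * q τ) t := by
  have hF : HasDerivAt (fun τ => 2 * τ * HSext (q τ) (p τ) τ - p τ * q τ) _ t :=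
    (((hasDerivAt_id' t).const_mul 2).mul (hasDerivAt_HSext_of_flow hq hp)).sub (hp.mul hq)
  rw [hF.deriv, HSext]
  ring

theorem extended_form_ds_component {q p : ℝ → ℝ} {s : ℝ} (t : ℝ)
    (hq : DifferentiableAt ℝ q s) (hp : DifferentiableAt ℝ p s) :
    (2 / 3) * (p s * deriv q s - (1 / 2) * q s * deriv p s
        - 2 * t * (t * q s + 2 * q s ^ 3) * deriv q s + (t / 2) * p s * deriv p s)
      - p s * deriv q s
      = (1 / 3) * deriv (fun x => 2 * t * HSext (q x) (p x) t - p x * q x) s := by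
  have hH := hasDerivAt_HSext hq.hasDerivAt hp.hasDerivAt (hasDerivAt_const s t)
  have hF : HasDerivAt (fun x => 2 * t * HSext (q x) (p x) t - p x * q x) _ s :=
    (hH.const_mul (2 * t)).sub (hp.hasDerivAt.mul hq.hasDerivAt)
  rw [hF.deriv]
  ring

/-- with `ω_ext = H_S dt + (2/3)Σ_j (p q_{s_j} - (1/2)q p_{s_j}
- 2t(tq+2q³)q_{s_j} + (t/2)p p_{s_j}) ds_j`, one has, provided `(q,p)` satisfy the flow
`q_t = p/2`, `p_t = 2tq + 4q³`, the identity of 1-forms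
`ω_ext - (p dq - H_S dt) = (1/3) d(2t H_S - pq)`, stated componentwise in `(t,s₁,s₂)`. -/
theorem extended_form_minus_action_is_exact
    (q p : ℝ → ℝ → ℝ → ℝ)
    (hqt : ∀ t s₁ s₂ : ℝ, HasDerivAt (fun τ => q τ s₁ s₂) (p t s₁ s₂ / 2) t)
    (hpt : ∀ t s₁ s₂ : ℝ, HasDerivAt (fun τ => p τ s₁ s₂)
      (2 * t * q t s₁ s₂ + 4 * (q t s₁ s₂) ^ 3) t)
    (hq1 : ∀ t s₁ s₂ : ℝ, DifferentiableAt ℝ (fun x => q t x s₂) s₁)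
    (hp1 : ∀ t s₁ s₂ : ℝ, DifferentiableAt ℝ (fun x => p t x s₂) s₁)
    (hq2 : ∀ t s₁ s₂ : ℝ, DifferentiableAt ℝ (fun y => q t s₁ y) s₂)
    (hp2 : ∀ t s₁ s₂ : ℝ, DifferentiableAt ℝ (fun y => p t s₁ y) s₂) :
    ∀ t s₁ s₂ : ℝ,
      -- dt-component: H_S - (p q_t - H_S) = (1/3) ∂_t (2t H_S - pq)
      (HSext (q t s₁ s₂) (p t s₁ s₂) t
          - (p t s₁ s₂ * (p t s₁ s₂ / 2) - HSext (q t s₁ s₂) (p t s₁ s₂) t)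
        = (1 / 3) * deriv (fun τ => 2 * τ * HSext (q τ s₁ s₂) (p τ s₁ s₂) τ
            - p τ s₁ s₂ * q τ s₁ s₂) t) ∧
      -- ds₁-component
      ((2 / 3) * (p t s₁ s₂ * deriv (fun x => q t x s₂) s₁
            - (1 / 2) * q t s₁ s₂ * deriv (fun x => p t x s₂) s₁
            - 2 * t * (t * q t s₁ s₂ + 2 * (q t s₁ s₂) ^ 3) * deriv (fun x => q t x s₂) s₁
            + (t / 2) * p t s₁ s₂ * deriv (fun x => p t x s₂) s₁)
          - p t s₁ s₂ * deriv (fun x => q t x s₂) s₁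
        = (1 / 3) * deriv (fun x => 2 * t * HSext (q t x s₂) (p t x s₂) t
            - p t x s₂ * q t x s₂) s₁) ∧
      -- ds₂-component
      ((2 / 3) * (p t s₁ s₂ * deriv (fun y => q t s₁ y) s₂
            - (1 / 2) * q t s₁ s₂ * deriv (fun y => p t s₁ y) s₂
            - 2 * t * (t * q t s₁ s₂ + 2 * (q t s₁ s₂) ^ 3) * deriv (fun y => q t s₁ y) s₂
            + (t / 2) * p t s₁ s₂ * deriv (fun y => p t s₁ y) s₂)
          - p t s₁ s₂ * deriv (fun y => q t s₁ y) s₂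
        = (1 / 3) * deriv (fun y => 2 * t * HSext (q t s₁ y) (p t s₁ y) t
            - p t s₁ y * q t s₁ y) s₂) := fun t s₁ s₂ =>
  ⟨extended_form_dt_component (p := fun τ => p τ s₁ s₂) (hqt t s₁ s₂) (hpt t s₁ s₂),
    extended_form_ds_component t (hq1 t s₁ s₂) (hp1 t s₁ s₂),
    extended_form_ds_component t (hq2 t s₁ s₂) (hp2 t s₁ s₂)⟩
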